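/- arXiv:2509.09578 — 5 statements merged into one kernel-verified Lean document; each statement's English description precedes it below -/
import Mathlib

section
/- If positive integers n, ℓ, m, d with n ≥ 5, 1 ≤ d ≤ 9 and m ≥ 2 satisfy (T_n + 1)(T_{n+1} + 1)⋯(T_{n+ℓ-1} + 1) = d·(10^m − 1)/9, then ℓ ≤ 7. -/
/-!
`T_k + 1` is even exactly when `k ≡ 1, 2 (mod 4)`, because `T` is `4`-periodic modulo `2`. Hence any
eight consecutive factors `T_k + 1` contribute `2⁴ = 16` to the product, so for `ℓ ≥ 8` the product
is divisible by `16`. On the other side `10 ^ m - 1` is odd, so `16` would have to divide `d ≤ 9`.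
-/

/-- The Tribonacci sequence: T 0 = 0, T 1 = T 2 = 1, T (n+3) = T (n+2) + T (n+1) + T n. -/
def trib : ℕ → ℕ
  | 0 => 0
  | 1 => 1
  | 2 => 1
  | n + 3 => trib (n + 2) + trib (n + 1) + trib n

open Finset

theorem Finset.pow_card_filter_dvd_prod {ι M : Type*} [CommMonoid M] (s : Finset ι) (f : ι → M)
    (p : M) [DecidablePred fun i => p ∣ f i] : p ^ #{i ∈ s | p ∣ f i} ∣ ∏ i ∈ s, f i := by
  rw [← prod_filter_mul_prod_filter_not s (fun i => p ∣ f i), ← prod_const]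
  exact (prod_dvd_prod_of_dvd _ _ fun i hi => (mem_filter.mp hi).2).mul_right _

theorem trib_add_four (n : ℕ) : trib (n + 4) = trib n + 2 * (trib (n + 1) + trib (n + 2)) := by
  simp only [trib]
  ring

theorem two_dvd_trib_add_one_iff (k : ℕ) : 2 ∣ trib k + 1 ↔ k % 4 = 1 ∨ k % 4 = 2 := by
  induction k using Nat.strong_induction_on with
  | _ k ih =>
    match k with
    | 0 | 1 | 2 | 3 => decide
    | k + 4 =>
      rw [trib_add_four]
      have := ih k (by omega)
      omega

theorem sixteen_dvd_prod_range_eight_trib_add_one (n : ℕ) :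
    16 ∣ ∏ i ∈ range 8, (trib (n + i) + 1) := by
  have hcard : #{i ∈ range 8 | 2 ∣ trib (n + i) + 1} = 4 := by
    simp only [two_dvd_trib_add_one_iff, Nat.add_mod n]
    have hr : n % 4 < 4 := Nat.mod_lt n (by norm_num)
    interval_cases n % 4 <;> decide
  simpa [hcard] using pow_card_filter_dvd_prod (range 8) (fun i => trib (n + i) + 1) 2

theorem not_sixteen_dvd_mul_ten_pow_sub_one {d m : ℕ} (hd0 : 0 < d) (hd : d < 16) (hm : 0 < m) :
    ¬ 16 ∣ d * (10 ^ m - 1) := by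
  have hodd : Odd (10 ^ m - 1) :=
    Nat.Even.sub_odd (Nat.one_le_pow _ _ (by norm_num)) ((by decide : Even 10).pow_of_ne_zero hm.ne')
    odd_one
  have hcop : Nat.Coprime (2 ^ 4) (10 ^ m - 1) := (Nat.coprime_two_left.mpr hodd).pow_left 4
  exact fun h => absurd (Nat.le_of_dvd hd0 (hcop.dvd_of_dvd_mul_right h)) (by omega)

theorem length_le_seven_of_repdigit_prod_trib_plus_one_general
    (n ℓ m d : ℕ) (hm : 2 ≤ m) (hd1 : 1 ≤ d) (hd9 : d ≤ 9)
    (heq : 9 * ∏ i ∈ Finset.range ℓ, (trib (n + i) + 1) = d * (10 ^ m - 1)) :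
    ℓ ≤ 7 := by
  by_contra! hℓ
  have h16 : 16 ∣ ∏ i ∈ range ℓ, (trib (n + i) + 1) :=
    (sixteen_dvd_prod_range_eight_trib_add_one n).trans
      (prod_dvd_prod_of_subset _ _ _ (range_subset_range.mpr hℓ))
  exact not_sixteen_dvd_mul_ten_pow_sub_one hd1 (by omega) (by omega) (heq ▸ h16.mul_left 9)

/-- If positive integers `n, ℓ, m, d` with `n ≥ 5`, `1 ≤ d ≤ 9` and `m ≥ 2` satisfy
`(T_n + 1)(T_{n+1} + 1) ⋯ (T_{n+ℓ-1} + 1) = d * (10 ^ m - 1) / 9`, then `ℓ ≤ 7`. -/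
theorem length_le_seven_of_repdigit_prod_trib_plus_one
    (n ℓ m d : ℕ) (hn : 5 ≤ n) (hℓ : 0 < ℓ) (hm : 2 ≤ m) (hd1 : 1 ≤ d) (hd9 : d ≤ 9)
    (heq : 9 * ∏ i ∈ Finset.range ℓ, (trib (n + i) + 1) = d * (10 ^ m - 1)) :
    ℓ ≤ 7 :=
  length_le_seven_of_repdigit_prod_trib_plus_one_general n ℓ m d hm hd1 hd9 heq
end

section
/- If positive integers n, ℓ, m, d with n ≥ 5, 1 ≤ d ≤ 9 and m ≥ 2 satisfy (T_n − 1)(T_{n+1} − 1)⋯(T_{n+ℓ-1} − 1) = d·(10^m − 1)/9, then ℓ ≤ 6. -/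
theorem trib_add_eight_mod_four (k : ℕ) : trib (k + 8) % 4 = trib k % 4 := by
  suffices ∀ k, trib (k + 8) % 4 = trib k % 4 ∧ trib (k + 9) % 4 = trib (k + 1) % 4 ∧
      trib (k + 10) % 4 = trib (k + 2) % 4 from (this k).1
  intro k
  induction k with
  | zero => decide
  | succ k ih =>
    obtain ⟨h₀, h₁, h₂⟩ := ih
    refine ⟨h₁, h₂, ?_⟩
    change (trib (k + 10) + trib (k + 9) + trib (k + 8)) % 4
      = (trib (k + 2) + trib (k + 1) + trib k) % 4
    omega

theorem trib_mod_four (k : ℕ) : trib k % 4 = trib (k % 8) % 4 := by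
  induction k using Nat.strong_induction_on with
  | _ k ih =>
    rcases Nat.lt_or_ge k 8 with hk | hk
    · rw [Nat.mod_eq_of_lt hk]
    · obtain ⟨j, rfl⟩ := Nat.exists_eq_add_of_le' hk
      rw [trib_add_eight_mod_four, Nat.add_mod_right, ih j (by omega)]

theorem exists_pair_trib_mod_four_eq_one (n : ℕ) :
    ∃ j < 7, ∃ i < j, trib (n + i) % 4 = 1 ∧ trib (n + j) % 4 = 1 := by
  have residues : ∀ r < 8, ∃ j < 7, ∃ i < j,
      trib ((r + i) % 8) % 4 = 1 ∧ trib ((r + j) % 8) % 4 = 1 := by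
    decide
  obtain ⟨j, hj, i, hij, hi₁, hj₁⟩ := residues (n % 8) (Nat.mod_lt n (by norm_num))
  refine ⟨j, hj, i, hij, ?_, ?_⟩ <;> rwa [trib_mod_four, ← Nat.mod_add_mod]

theorem Finset.mul_dvd_prod_of_ne {ι M : Type*} [CommMonoid M] [DecidableEq ι] {s : Finset ι}
    {f : ι → M} {i j : ι} (hi : i ∈ s) (hj : j ∈ s) (hij : i ≠ j) : f i * f j ∣ ∏ k ∈ s, f k :=
  Finset.prod_pair (f := f) hij ▸ Finset.prod_dvd_prod_of_subset _ _ f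
    (Finset.insert_subset hi (Finset.singleton_subset_iff.mpr hj))

theorem Int.dvd_of_two_pow_dvd_mul_odd {a b : ℤ} {k : ℕ} (hb : Odd b) (h : 2 ^ k ∣ a * b) :
    2 ^ k ∣ a :=
  (Int.isCoprime_two_left.mpr hb).pow_left.dvd_of_dvd_mul_right h

theorem odd_ten_pow_sub_one {m : ℕ} (hm : m ≠ 0) : Odd ((10 : ℤ) ^ m - 1) :=
  (Even.pow_of_ne_zero (by decide) hm).sub_odd odd_one

theorem length_le_six_of_repdigit_prod_trib_minus_one_general
    (n ℓ m d : ℕ) (hm : 2 ≤ m) (hd1 : 1 ≤ d) (hd9 : d ≤ 9)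
    (heq : 9 * ∏ i ∈ Finset.range ℓ, ((trib (n + i) : ℤ) - 1) = (d : ℤ) * (10 ^ m - 1)) :
    ℓ ≤ 6 := by
  by_contra! hℓ
  obtain ⟨j, hj, i, hij, hi₁, hj₁⟩ := exists_pair_trib_mod_four_eq_one n
  have h16 : (2 : ℤ) ^ 4 ∣ 9 * ∏ k ∈ Finset.range ℓ, ((trib (n + k) : ℤ) - 1) := by
    have hi₄ : (4 : ℤ) ∣ (trib (n + i) : ℤ) - 1 := by omega
    have hj₄ : (4 : ℤ) ∣ (trib (n + j) : ℤ) - 1 := by omega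
    refine Dvd.dvd.mul_left ((mul_dvd_mul hi₄ hj₄).trans ?_) 9
    exact Finset.mul_dvd_prod_of_ne (f := fun k ↦ (trib (n + k) : ℤ) - 1)
      (Finset.mem_range.mpr (by omega)) (Finset.mem_range.mpr (by omega)) hij.ne
  rw [heq] at h16
  have hd := Int.le_of_dvd (by omega) (Int.dvd_of_two_pow_dvd_mul_odd
    (odd_ten_pow_sub_one (by omega)) h16)
  omega

/-- If positive integers `n, ℓ, m, d` with `n ≥ 5`, `1 ≤ d ≤ 9` and `m ≥ 2` satisfy
`(T_n - 1)(T_{n+1} - 1) ⋯ (T_{n+ℓ-1} - 1) = d * (10 ^ m - 1) / 9`, then `ℓ ≤ 6`. -/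
theorem length_le_six_of_repdigit_prod_trib_minus_one
    (n ℓ m d : ℕ) (hn : 5 ≤ n) (hℓ : 0 < ℓ) (hm : 2 ≤ m) (hd1 : 1 ≤ d) (hd9 : d ≤ 9)
    (heq : 9 * ∏ i ∈ Finset.range ℓ, ((trib (n + i) : ℤ) - 1) = (d : ℤ) * (10 ^ m - 1)) :
    ℓ ≤ 6 :=
  length_le_six_of_repdigit_prod_trib_minus_one_general n ℓ m d hm hd1 hd9 heq
end

section
/- For every integer n ≥ 5, the 2-adic valuation of T_n − 1 is given by: v_2(T_n − 1) = 0 if n ≡ 0 or 3 (mod 4); v_2(T_n − 1) = 1 if n ≡ 5 (mod 8); v_2(T_n − 1) = v_2(n+2) − 1 if n ≡ 6 (mod 8); v_2(T_n − 1) = v_2(n−2) − 1 if n ≡ 2 (mod 8); and v_2(T_n − 1) = v_2((n−1)(n+7)) − 3 if n ≡ 1 (mod 8). -/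
section TwoAdicPowers

variable {R : Type*} [Ring R]

theorem exists_one_add_pow_eq (y : R) (u : ℕ) : ∃ d, (1 + y) ^ u = 1 + u • y + y * y * d := by
  induction u with
  | zero => exact ⟨0, by simp⟩
  | succ u ih =>
    obtain ⟨d, hd⟩ := ih
    refine ⟨u • 1 + d + d * y, ?_⟩
    rw [pow_succ, hd]
    simp only [mul_add, add_mul, one_mul, mul_one, succ_nsmul, smul_mul_assoc, mul_smul_comm,
      mul_assoc]
    abel

theorem exists_pow_two_pow_eq {x a : R} {k : ℕ} (hx : x = 1 + (2 ^ (k + 1) : ℤ) • a) (f : ℕ) :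
    ∃ c, x ^ 2 ^ f = 1 + (2 ^ (k + 1 + f) : ℤ) • (a + (2 ^ k : ℤ) • c) := by
  induction f with
  | zero => exact ⟨0, by simpa using hx⟩
  | succ f ih =>
    obtain ⟨c, hc⟩ := ih
    set w := a + (2 ^ k : ℤ) • c
    refine ⟨c + (2 ^ f : ℤ) • (w * w), ?_⟩
    rw [pow_succ, pow_mul, hc, sq]
    simp only [mul_add, add_mul, one_mul, mul_one, smul_mul_assoc, mul_smul_comm, smul_add,
      smul_smul, w]
    module

theorem exists_pow_two_pow_mul_eq {x a : R} {k : ℕ} (hx : x = 1 + (2 ^ (k + 1) : ℤ) • a)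
    (f u : ℕ) :
    ∃ c, x ^ (2 ^ f * u) = 1 + (2 ^ (k + 1 + f) : ℤ) • ((u : ℤ) • a + (2 ^ k : ℤ) • c) := by
  obtain ⟨c, hc⟩ := exists_pow_two_pow_eq hx f
  set w := a + (2 ^ k : ℤ) • c
  obtain ⟨d, hd⟩ := exists_one_add_pow_eq ((2 ^ (k + 1 + f) : ℤ) • w) u
  refine ⟨(u : ℤ) • c + (2 ^ (f + 1) : ℤ) • (w * w * d), ?_⟩
  rw [pow_mul, hc, hd]
  simp only [smul_mul_assoc, mul_smul_comm, smul_smul, ← natCast_zsmul]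
  module

end TwoAdicPowers

theorem padicValInt_two_pow_mul_odd (e : ℕ) {v : ℤ} (hv : Odd v) :
    padicValInt 2 (2 ^ e * v) = e := by
  rw [padicValInt.mul (by positivity) (by rintro rfl; simp at hv),
    padicValInt.eq_zero_of_not_dvd (z := v) (by simpa [← even_iff_two_dvd] using hv), add_zero,
    show (2 : ℤ) ^ e = ((2 ^ e : ℕ) : ℤ) by push_cast; rfl, padicValInt.of_nat,
    padicValNat.prime_pow]

theorem padicValNat_two_pow_mul_odd (k : ℕ) {u : ℕ} (hu : Odd u) :
    padicValNat 2 (2 ^ k * u) = k := by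
  rw [← padicValInt.of_nat, Nat.cast_mul, Nat.cast_pow, Nat.cast_ofNat,
    padicValInt_two_pow_mul_odd k hu.natCast]

theorem exists_odd_eq_two_pow_padicValNat_mul {m : ℕ} (hm : m ≠ 0) :
    ∃ u, Odd u ∧ m = 2 ^ padicValNat 2 m * u := by
  obtain ⟨k, u, hu, rfl⟩ := Nat.exists_eq_two_pow_mul_odd hm
  exact ⟨u, hu, by rw [padicValNat_two_pow_mul_odd k hu]⟩

theorem padicValNat_sub_one_eq_of_eq_two_pow_mul_odd {x e : ℕ} {v : ℤ}
    (h : (x : ℤ) - 1 = 2 ^ e * v) (hv : Odd v) : padicValNat 2 (x - 1) = e := by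
  rcases Nat.eq_zero_or_pos x with rfl | hx
  · obtain rfl : e = 0 := by
      rcases e with _ | e
      · rfl
      · rw [pow_succ', mul_assoc] at h; omega
    simp
  · rw [← padicValInt.of_nat, Nat.cast_sub hx, Nat.cast_one, h, padicValInt_two_pow_mul_odd e hv]

open Matrix

def tribMatrix : Matrix (Fin 3) (Fin 3) ℤ := !![1, 1, 1; 1, 0, 0; 0, 1, 0]

def tribMatrixInv : Matrix (Fin 3) (Fin 3) ℤ := !![0, 1, 0; 0, 0, 1; 1, -1, -1]

def tribDefect : Matrix (Fin 3) (Fin 3) ℤ := !![20, 17, 11; 11, 9, 6; 6, 5, 3]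

theorem tribMatrix_pow_mulVec (n : ℕ) :
    tribMatrix ^ (n + 2) *ᵥ ![0, 0, 1] = ![(trib (n + 2) : ℤ), trib (n + 1), trib n] := by
  induction n with
  | zero => decide
  | succ n ih =>
    rw [pow_succ', ← mulVec_mulVec, ih]
    ext i
    fin_cases i <;> simp [tribMatrix, mulVec, dotProduct, Fin.sum_univ_three, trib]

theorem trib_eq_tribMatrix_pow_apply (n : ℕ) : (trib n : ℤ) = (tribMatrix ^ (n + 2)) 2 2 := by
  simpa [mulVec, dotProduct, Fin.sum_univ_three] using (congrFun (tribMatrix_pow_mulVec n) 2).symm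

theorem tribMatrix_pow_eight : tribMatrix ^ 8 = 1 + (4 : ℤ) • tribDefect := by
  decide

theorem tribMatrix_pow_sixteen :
    tribMatrix ^ 16 = 1 + (8 : ℤ) • (tribDefect + (2 : ℤ) • tribDefect ^ 2) := by
  rw [show 16 = 8 * 2 from rfl, pow_mul, tribMatrix_pow_eight, sq, sq]
  simp only [mul_add, add_mul, one_mul, mul_one, smul_mul_assoc, mul_smul_comm, smul_add,
    smul_smul]
  module

theorem exists_tribMatrix_pow_two_pow_mul_eq {k : ℕ} (hk : 3 ≤ k) (u : ℕ) :
    ∃ C, tribMatrix ^ (2 ^ k * u) =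
      1 + (2 ^ (k - 1) : ℤ) • ((u : ℤ) • tribDefect + (2 : ℤ) • C) := by
  obtain ⟨j, rfl⟩ : ∃ j, k = j + 3 := ⟨k - 3, by omega⟩
  obtain ⟨C, hC⟩ := exists_pow_two_pow_mul_eq (k := 1) tribMatrix_pow_eight j u
  refine ⟨C, ?_⟩
  rw [show 2 ^ (j + 3) * u = 8 * (2 ^ j * u) by ring, pow_mul, hC,
    show 1 + 1 + j = j + 3 - 1 by omega, pow_one]

theorem exists_tribMatrix_pow_two_pow_mul_eq_of_four_le {k : ℕ} (hk : 4 ≤ k) (u : ℕ) :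
    ∃ C, tribMatrix ^ (2 ^ k * u) =
      1 + (2 ^ (k - 1) : ℤ) •
        ((u : ℤ) • (tribDefect + (2 : ℤ) • tribDefect ^ 2) + (4 : ℤ) • C) := by
  obtain ⟨j, rfl⟩ : ∃ j, k = j + 4 := ⟨k - 4, by omega⟩
  obtain ⟨C, hC⟩ := exists_pow_two_pow_mul_eq (k := 2) tribMatrix_pow_sixteen j u
  refine ⟨C, ?_⟩
  rw [show 2 ^ (j + 4) * u = 16 * (2 ^ j * u) by ring, pow_mul, hC,
    show 2 + 1 + j = j + 4 - 1 by omega]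
  norm_num

theorem trib_sub_one_eq_mul_apply {m n : ℕ} {c : ℤ} {W Y : Matrix (Fin 3) (Fin 3) ℤ}
    (hW : tribMatrix ^ m * W = tribMatrix ^ (n + 2)) (hW₁ : W 2 2 = 1)
    (hY : tribMatrix ^ m = 1 + c • Y) : (trib n : ℤ) - 1 = c * (Y * W) 2 2 := by
  rw [trib_eq_tribMatrix_pow_apply, ← hW, hY, add_mul, one_mul, smul_mul_assoc,
    Matrix.add_apply, Matrix.smul_apply, smul_eq_mul, hW₁, add_sub_cancel_left]

theorem padicValNat_trib_sub_one_of_three_le {k u n : ℕ} {W : Matrix (Fin 3) (Fin 3) ℤ}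
    (hk : 3 ≤ k) (hu : Odd u) (hW : tribMatrix ^ (2 ^ k * u) * W = tribMatrix ^ (n + 2))
    (hW₁ : W 2 2 = 1) (hDW : Odd ((tribDefect * W) 2 2)) :
    padicValNat 2 (trib n - 1) = k - 1 := by
  obtain ⟨C, hC⟩ := exists_tribMatrix_pow_two_pow_mul_eq hk u
  refine padicValNat_sub_one_eq_of_eq_two_pow_mul_odd (trib_sub_one_eq_mul_apply hW hW₁ hC) ?_
  simp only [add_mul, smul_mul_assoc, Matrix.add_apply, Matrix.smul_apply, smul_eq_mul]
  exact (hu.natCast.mul hDW).add_even (even_two_mul _)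

theorem padicValNat_trib_sub_one_of_four_le {k u n : ℕ} {W : Matrix (Fin 3) (Fin 3) ℤ}
    (hk : 4 ≤ k) (hu : Odd u) (hW : tribMatrix ^ (2 ^ k * u) * W = tribMatrix ^ (n + 2))
    (hW₁ : W 2 2 = 1) (hDW : ((tribDefect + (2 : ℤ) • tribDefect ^ 2) * W) 2 2 % 4 = 2) :
    padicValNat 2 (trib n - 1) = k := by
  obtain ⟨C, hC⟩ := exists_tribMatrix_pow_two_pow_mul_eq_of_four_le hk u
  set A := tribDefect + (2 : ℤ) • tribDefect ^ 2
  have key := trib_sub_one_eq_mul_apply hW hW₁ hC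
  simp only [add_mul, smul_mul_assoc, Matrix.add_apply, Matrix.smul_apply, smul_eq_mul] at key
  obtain ⟨b, hb, hAW⟩ : ∃ b, Odd b ∧ (A * W) 2 2 = 2 * b :=
    ⟨(A * W) 2 2 / 2, Int.odd_iff.2 (by omega), by omega⟩
  obtain ⟨j, rfl⟩ : ∃ j, k = j + 1 := ⟨k - 1, by omega⟩
  refine padicValNat_sub_one_eq_of_eq_two_pow_mul_odd (v := u * b + 2 * (C * W) 2 2)
    (by rw [key, hAW, Nat.add_sub_cancel]; ring) ?_
  exact (hu.natCast.mul hb).add_even (even_two_mul _)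

theorem trib_add_eight_modEq (n : ℕ) : (trib (n + 8) : ℤ) ≡ trib n [ZMOD 4] := by
  rw [trib_eq_tribMatrix_pow_apply, trib_eq_tribMatrix_pow_apply,
    show n + 8 + 2 = n + 2 + 8 from rfl, pow_add, tribMatrix_pow_eight, mul_add, mul_one,
    mul_smul_comm, Matrix.add_apply, Matrix.smul_apply, smul_eq_mul]
  exact Int.add_mul_emod_self_left _ _ _

theorem trib_modEq_trib_mod_eight (n : ℕ) : (trib n : ℤ) ≡ trib (n % 8) [ZMOD 4] := by
  induction n using Nat.strong_induction_on with
  | _ n ih =>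
    rcases lt_or_ge n 8 with hn | hn
    · rw [Nat.mod_eq_of_lt hn]
    · obtain ⟨m, rfl⟩ : ∃ m, n = m + 8 := ⟨n - 8, by omega⟩
      rw [Nat.add_mod_right]
      exact (trib_add_eight_modEq m).trans (ih m (by omega))

theorem padicValNat_trib_sub_one_of_mod_four {n : ℕ} (h : n % 4 = 0 ∨ n % 4 = 3) :
    padicValNat 2 (trib n - 1) = 0 := by
  have h4 := trib_modEq_trib_mod_eight n
  have heven : (trib n : ℤ) % 2 = 0 := by
    rcases (by omega : n % 8 = 0 ∨ n % 8 = 3 ∨ n % 8 = 4 ∨ n % 8 = 7) with h8 | h8 | h8 | h8 <;>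
      · rw [h8] at h4
        norm_num [Int.ModEq, trib] at h4
        omega
  exact padicValNat_sub_one_eq_of_eq_two_pow_mul_odd (e := 0) (v := trib n - 1) (by ring)
    (Int.odd_iff.2 (by omega))

theorem padicValNat_trib_sub_one_of_mod_eight_eq_five {n : ℕ} (h : n % 8 = 5) :
    padicValNat 2 (trib n - 1) = 1 := by
  have h4 := trib_modEq_trib_mod_eight n
  rw [h] at h4
  norm_num [Int.ModEq, trib] at h4
  exact padicValNat_sub_one_eq_of_eq_two_pow_mul_odd (e := 1) (v := ((trib n : ℤ) - 1) / 2)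
    (by omega) (Int.odd_iff.2 (by omega))

theorem padicValNat_trib_sub_one_of_mod_eight_eq_six {n : ℕ} (h : n % 8 = 6) :
    padicValNat 2 (trib n - 1) + 1 = padicValNat 2 (n + 2) := by
  obtain ⟨u, hu, hm⟩ := exists_odd_eq_two_pow_padicValNat_mul (m := n + 2) (by omega)
  have hk : 3 ≤ padicValNat 2 (n + 2) := (padicValNat_dvd_iff_le (by omega)).1 (by omega)
  rw [padicValNat_trib_sub_one_of_three_le hk hu (W := 1) (by rw [mul_one, ← hm]) rfl
    (by decide)]
  omega

theorem padicValNat_trib_sub_one_of_mod_eight_eq_two {n : ℕ} (h : n % 8 = 2) (hn : 2 < n) :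
    padicValNat 2 (trib n - 1) + 1 = padicValNat 2 (n - 2) := by
  obtain ⟨u, hu, hm⟩ := exists_odd_eq_two_pow_padicValNat_mul (m := n - 2) (by omega)
  have hk : 3 ≤ padicValNat 2 (n - 2) := (padicValNat_dvd_iff_le (by omega)).1 (by omega)
  rw [padicValNat_trib_sub_one_of_three_le hk hu (W := tribMatrix ^ 4)
    (by rw [← pow_add, ← hm]; congr 1; omega) (by decide) (by decide)]
  omega

theorem padicValNat_trib_sub_one_of_mod_sixteen_eq_one {n : ℕ} (h : n % 16 = 1) (hn : 1 < n) :
    padicValNat 2 (trib n - 1) + 3 = padicValNat 2 ((n - 1) * (n + 7)) := by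
  obtain ⟨u, hu, hm⟩ := exists_odd_eq_two_pow_padicValNat_mul (m := n - 1) (by omega)
  have hk : 4 ≤ padicValNat 2 (n - 1) := (padicValNat_dvd_iff_le (by omega)).1 (by omega)
  have h7 : padicValNat 2 (n + 7) = 3 := by
    rw [show n + 7 = 2 ^ 3 * ((n + 7) / 8) by omega]
    exact padicValNat_two_pow_mul_odd 3 (Nat.odd_iff.2 (by omega))
  rw [padicValNat.mul (by omega) (by omega), h7,
    padicValNat_trib_sub_one_of_four_le hk hu (W := tribMatrix ^ 3)
      (by rw [← pow_add, ← hm]; congr 1; omega) (by decide) (by decide)]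

theorem padicValNat_trib_sub_one_of_mod_sixteen_eq_nine {n : ℕ} (h : n % 16 = 9) :
    padicValNat 2 (trib n - 1) + 3 = padicValNat 2 ((n - 1) * (n + 7)) := by
  obtain ⟨u, hu, hm⟩ := exists_odd_eq_two_pow_padicValNat_mul (m := n + 7) (by omega)
  have hk : 4 ≤ padicValNat 2 (n + 7) := (padicValNat_dvd_iff_le (by omega)).1 (by omega)
  have h1 : padicValNat 2 (n - 1) = 3 := by
    rw [show n - 1 = 2 ^ 3 * ((n - 1) / 8) by omega]
    exact padicValNat_two_pow_mul_odd 3 (Nat.odd_iff.2 (by omega))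
  have hW : tribMatrix ^ (n + 7) * tribMatrixInv ^ 5 = tribMatrix ^ (n + 2) := by
    rw [show n + 7 = n + 2 + 5 from rfl, pow_add, mul_assoc,
      show tribMatrix ^ 5 * tribMatrixInv ^ 5 = 1 by decide, mul_one]
  rw [padicValNat.mul (by omega) (by omega), h1,
    padicValNat_trib_sub_one_of_four_le hk hu (by rw [← hm, hW]) (by decide) (by decide),
    add_comm]

/-- The 2-adic valuation of `T_n - 1` for `n ≥ 5`. -/
theorem two_adic_valuation_trib_minus_one :
    ∀ n : ℕ, 5 ≤ n →
      ((n % 4 = 0 ∨ n % 4 = 3) → padicValNat 2 (trib n - 1) = 0) ∧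
      (n % 8 = 5 → padicValNat 2 (trib n - 1) = 1) ∧
      (n % 8 = 6 →
        (padicValNat 2 (trib n - 1) : ℤ) = (padicValNat 2 (n + 2) : ℤ) - 1) ∧
      (n % 8 = 2 →
        (padicValNat 2 (trib n - 1) : ℤ) = (padicValNat 2 (n - 2) : ℤ) - 1) ∧
      (n % 8 = 1 →
        (padicValNat 2 (trib n - 1) : ℤ) = (padicValNat 2 ((n - 1) * (n + 7)) : ℤ) - 3) := by
  intro n hn
  refine ⟨padicValNat_trib_sub_one_of_mod_four, padicValNat_trib_sub_one_of_mod_eight_eq_five,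
    fun h => ?_, fun h => ?_, fun h => ?_⟩
  · have := padicValNat_trib_sub_one_of_mod_eight_eq_six h
    omega
  · have := padicValNat_trib_sub_one_of_mod_eight_eq_two h (by omega)
    omega
  · rcases (by omega : n % 16 = 1 ∨ n % 16 = 9) with h16 | h16
    · have := padicValNat_trib_sub_one_of_mod_sixteen_eq_one h16 (by omega)
      omega
    · have := padicValNat_trib_sub_one_of_mod_sixteen_eq_nine h16
      omega
end

section
/- For every integer n ≥ 5 with n ≡ 1 (mod 8), the 2-adic valuation of T_n − 1 is at least 4. -/
/-! Modulo 16 the Tribonacci sequence is periodic with period 32, as a third-order recurrence is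
determined by three consecutive values; so `T_n mod 16` is read off `n mod 32`, and for the four
residues `n ≡ 1 (mod 8)` below 32 it equals 1. -/

theorem Function.periodic_of_recurrence_three {α : Type*} {f : ℕ → α} (g : α → α → α → α)
    (hf : ∀ n, f (n + 3) = g (f (n + 2)) (f (n + 1)) (f n)) {p : ℕ}
    (h₀ : f p = f 0) (h₁ : f (p + 1) = f 1) (h₂ : f (p + 2) = f 2) :
    Function.Periodic f p := by
  intro n
  induction n using Nat.strong_induction_on with
  | _ n ih =>
    match n with
    | 0 => rw [zero_add, h₀]
    | 1 => rw [add_comm, h₁]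
    | 2 => rw [add_comm, h₂]
    | m + 3 =>
      rw [show m + 3 + p = m + p + 3 by omega, hf, hf,
        show m + p + 2 = m + 2 + p by omega, show m + p + 1 = m + 1 + p by omega,
        ih (m + 2) (by omega), ih (m + 1) (by omega), ih m (by omega)]

theorem trib_add_three (n : ℕ) : trib (n + 3) = trib (n + 2) + trib (n + 1) + trib n := rfl

theorem trib_mod_sixteen_periodic : Function.Periodic (fun n ↦ trib n % 16) 32 :=
  Function.periodic_of_recurrence_three (fun a b c ↦ (a + b + c) % 16)
    (fun n ↦ by simp only [trib_add_three]; omega)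
    (by decide) (by decide) (by decide)

theorem trib_mod_sixteen_of_mod_eight_eq_one {n : ℕ} (hn : n % 8 = 1) : trib n % 16 = 1 := by
  have hsmall : ∀ k < 32, k % 8 = 1 → trib k % 16 = 1 := by decide
  rw [← trib_mod_sixteen_periodic.map_mod_nat n]
  exact hsmall (n % 32) (Nat.mod_lt n (by norm_num)) (by omega)

theorem trib_pos {n : ℕ} (hn : 0 < n) : 0 < trib n := by
  induction n using Nat.strong_induction_on with
  | _ n ih =>
    match n with
    | 1 | 2 => decide
    | m + 3 =>
      have := ih (m + 2) (by omega) (by omega)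
      rw [trib_add_three]
      omega

theorem two_le_trib {n : ℕ} (hn : 3 ≤ n) : 2 ≤ trib n := by
  obtain ⟨m, rfl⟩ := Nat.exists_eq_add_of_le' hn
  have := trib_pos (n := m + 2) (by omega)
  have := trib_pos (n := m + 1) (by omega)
  rw [trib_add_three]
  omega

/-- For every `n ≥ 5` with `n ≡ 1 (mod 8)`, the 2-adic valuation of `T_n - 1` is at least 4. -/
theorem two_adic_valuation_trib_minus_one_ge_four
    (n : ℕ) (hn : 5 ≤ n) (hmod : n % 8 = 1) :
    4 ≤ padicValNat 2 (trib n - 1) := by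
  have h16 := trib_mod_sixteen_of_mod_eight_eq_one hmod
  have h2 := two_le_trib (by omega : 3 ≤ n)
  rw [← padicValNat_dvd_iff_le (by omega)]
  omega
end

section
/- For all positive integers n, ℓ, m, d with 1 ≤ d ≤ 9, one has d·10^m/9 ≠ c_α^ℓ · α^{ℓn + ℓ(ℓ−1)/2} as real numbers, where α is the unique real root of x³ − x² − x − 1 = 0 and c_α = 1/(3α² − 2α − 1). -/
/-!
The identity lives in `ℚ(α) ≅ ℚ[X]/(X³ - X² - X - 1)`, where the norm of `c - α` is the value
of the polynomial at `c`. Hence `α` has norm `1` and `3α² - 2α - 1 = 3(α - 1)(α + 1/3)` has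
norm `44`, so taking norms of `d·10^m·(3α² - 2α - 1)^ℓ = 9·α^k` gives `(d·10^m)³·44^ℓ = 9³`,
whose left side is even.
-/

open Polynomial AdjoinRoot

theorem PowerBasis.norm_algebraMap_sub_gen {R S : Type*} [CommRing R] [Ring S] [Algebra R S]
    (pb : PowerBasis R S) (c : R) :
    Algebra.norm R (algebraMap R S c - pb.gen) = (minpoly R pb.gen).eval c := by
  rw [Algebra.norm_eq_matrix_det pb.basis, map_sub, AlgHom.commutes,
    ← charpoly_leftMulMatrix, Matrix.eval_charpoly, Matrix.algebraMap_eq_diagonal]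
  rfl

theorem AdjoinRoot.norm_algebraMap_sub_root {K : Type*} [Field K] {f : K[X]} (hf : f.Monic)
    (c : K) : Algebra.norm K (algebraMap K (AdjoinRoot f) c - root f) = f.eval c := by
  rw [← powerBasis_gen hf.ne_zero, PowerBasis.norm_algebraMap_sub_gen,
    minpoly_powerBasis_gen_of_monic hf]

noncomputable def tribonacciPoly : ℚ[X] := X ^ 3 - X ^ 2 - X - 1

lemma tribonacciPoly_natDegree : tribonacciPoly.natDegree = 3 := by
  unfold tribonacciPoly; compute_degree!

lemma tribonacciPoly_monic : tribonacciPoly.Monic := by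
  unfold tribonacciPoly; monicity!

lemma eval_tribonacciPoly (x : ℚ) : tribonacciPoly.eval x = x ^ 3 - x ^ 2 - x - 1 := by
  simp [tribonacciPoly]

lemma aeval_tribonacciPoly {A : Type*} [CommRing A] [Algebra ℚ A] (x : A) :
    aeval x tribonacciPoly = x ^ 3 - x ^ 2 - x - 1 := by
  simp [tribonacciPoly]

lemma irreducible_tribonacciPoly : Irreducible tribonacciPoly := by
  refine irreducible_of_degree_le_three_of_not_isRoot (by simp [tribonacciPoly_natDegree]) ?_
  intro x hx
  have hZ : aeval x (X ^ 3 - X ^ 2 - X - 1 : ℤ[X]) = 0 := by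
    simpa [tribonacciPoly] using hx
  obtain ⟨z, rfl, hz⟩ := exists_integer_of_is_root_of_monic (by monicity!) hZ
  have hz1 : z ∣ 1 := by simpa using hz
  rcases Int.isUnit_iff.mp (isUnit_of_dvd_one hz1) with rfl | rfl <;> norm_num at hZ

lemma finrank_adjoinRoot_tribonacciPoly :
    Module.finrank ℚ (AdjoinRoot tribonacciPoly) = 3 := by
  rw [(powerBasis tribonacciPoly_monic.ne_zero).finrank, powerBasis_dim, tribonacciPoly_natDegree]

lemma norm_root_tribonacciPoly : Algebra.norm ℚ (root tribonacciPoly) = 1 := by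
  have h : root tribonacciPoly =
      algebraMap ℚ _ (-1) * (algebraMap ℚ _ 0 - root tribonacciPoly) := by simp
  rw [h, map_mul, Algebra.norm_algebraMap, finrank_adjoinRoot_tribonacciPoly,
    norm_algebraMap_sub_root tribonacciPoly_monic, eval_tribonacciPoly]
  norm_num

lemma norm_three_mul_root_sq_sub_two_mul_root_sub_one : Algebra.norm ℚ
    (3 * root tribonacciPoly ^ 2 - 2 * root tribonacciPoly - 1) = 44 := by
  have h : 3 * root tribonacciPoly ^ 2 - 2 * root tribonacciPoly - 1 =
      algebraMap ℚ _ 3 * ((algebraMap ℚ _ 1 - root tribonacciPoly) *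
        (algebraMap ℚ _ (-1 / 3) - root tribonacciPoly)) := by
    have h3 : algebraMap ℚ (AdjoinRoot tribonacciPoly) 3 * algebraMap ℚ _ (-1 / 3) = -1 := by
      rw [← map_mul]; norm_num
    rw [map_one, map_ofNat] at *
    linear_combination (root tribonacciPoly - 1) * h3
  rw [h, map_mul, map_mul, Algebra.norm_algebraMap, finrank_adjoinRoot_tribonacciPoly,
    norm_algebraMap_sub_root tribonacciPoly_monic, norm_algebraMap_sub_root tribonacciPoly_monic,
    eval_tribonacciPoly, eval_tribonacciPoly]
  norm_num

theorem cube_mul_44_pow_eq_of_mul_pow_eq {α : ℝ} (hα : α ^ 3 - α ^ 2 - α - 1 = 0) {q r : ℚ}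
    {ℓ k : ℕ} (h : (q : ℝ) * (3 * α ^ 2 - 2 * α - 1) ^ ℓ = r * α ^ k) :
    q ^ 3 * 44 ^ ℓ = r ^ 3 := by
  let φ : AdjoinRoot tribonacciPoly →ₐ[ℚ] ℝ :=
    liftAlgHom tribonacciPoly (Algebra.ofId ℚ ℝ) α <| by
      rwa [Algebra.toRingHom_ofId, ← aeval_def, aeval_tribonacciPoly]
  have hφ : φ (root tribonacciPoly) = α := liftAlgHom_root ..
  have hinj : Function.Injective φ := by
    have : Fact (Irreducible tribonacciPoly) := ⟨irreducible_tribonacciPoly⟩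
    exact φ.toRingHom.injective
  have hK : algebraMap ℚ _ q * (3 * root tribonacciPoly ^ 2 - 2 * root tribonacciPoly - 1) ^ ℓ =
      algebraMap ℚ _ r * root tribonacciPoly ^ k := by
    apply hinj
    simpa only [map_mul, map_pow, map_sub, map_ofNat, map_one, AlgHom.commutes, eq_ratCast, hφ]
      using h
  have hnorm := congrArg (Algebra.norm ℚ) hK
  rwa [map_mul, map_mul, map_pow, map_pow, Algebra.norm_algebraMap, Algebra.norm_algebraMap,
    norm_three_mul_root_sq_sub_two_mul_root_sub_one, norm_root_tribonacciPoly, one_pow, mul_one,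
    finrank_adjoinRoot_tribonacciPoly] at hnorm

theorem repdigit_ne_power_expression_general (α : ℝ) (hroot : α ^ 3 - α ^ 2 - α - 1 = 0)
    (cα : ℝ) (hc : cα = 1 / (3 * α ^ 2 - 2 * α - 1))
    (n ℓ m d : ℕ) (hm : 0 < m) :
    (d : ℝ) * 10 ^ m / 9 ≠ cα ^ ℓ * α ^ (ℓ * n + ℓ * (ℓ - 1) / 2) := by
  intro h
  have hα_gt_one : 1 < α := by nlinarith [sq_nonneg (α + 1)]
  have hy : 3 * α ^ 2 - 2 * α - 1 ≠ 0 := by nlinarith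
  have hreal : (((d * 10 ^ m : ℕ) : ℚ) : ℝ) * (3 * α ^ 2 - 2 * α - 1) ^ ℓ =
      ((9 : ℚ) : ℝ) * α ^ (ℓ * n + ℓ * (ℓ - 1) / 2) := by
    set y := 3 * α ^ 2 - 2 * α - 1
    rw [hc, div_pow, one_pow] at h
    field_simp at h
    push_cast
    linear_combination h
  have hnat : (d * 10 ^ m) ^ 3 * 44 ^ ℓ = 9 ^ 3 := by
    exact_mod_cast cube_mul_44_pow_eq_of_mul_pow_eq hroot hreal
  have htwo : 2 ∣ (d * 10 ^ m) ^ 3 * 44 ^ ℓ :=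
    ((((dvd_pow (by norm_num) hm.ne').mul_left d).pow three_ne_zero).mul_right _)
  rw [hnat] at htwo
  norm_num at htwo

/-- For all positive integers `n, ℓ, m, d` with `1 ≤ d ≤ 9`, one has
`d * 10 ^ m / 9 ≠ c_α ^ ℓ * α ^ (ℓ * n + ℓ * (ℓ - 1) / 2)` as real numbers, where `α` is the
unique real root of `x ^ 3 - x ^ 2 - x - 1 = 0` and `c_α = 1 / (3 * α ^ 2 - 2 * α - 1)`. -/
theorem repdigit_ne_power_expression (α : ℝ) (hroot : α ^ 3 - α ^ 2 - α - 1 = 0)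
    (cα : ℝ) (hc : cα = 1 / (3 * α ^ 2 - 2 * α - 1))
    (n ℓ m d : ℕ) (hn : 0 < n) (hℓ : 0 < ℓ) (hm : 0 < m) (hd1 : 1 ≤ d) (hd9 : d ≤ 9) :
    (d : ℝ) * 10 ^ m / 9 ≠ cα ^ ℓ * α ^ (ℓ * n + ℓ * (ℓ - 1) / 2) :=
  repdigit_ne_power_expression_general α hroot cα hc n ℓ m d hm
end
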